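/- Let A ∈ ℝ^{m×m}, B ∈ ℝ^{m×1}, C ∈ ℝ^{1×m}, and let α < β be real scalars, ε > 0, M > 0. Suppose the matrices (P, L, J), with P symmetric positive definite, L ∈ ℝ^{p×m}, J ∈ ℝ^p, satisfy the ε-KYP conditions for the shifted realization (A − αBC, B, C, 1/(β−α)): P(A − αBC) + (A − αBC)ᵀP = −LᵀL − (ε/2)P, PB = Cᵀ − LᵀJ, JᵀJ = 2/(β−α). Let n : ℝ × ℝ → ℝ be continuous and satisfy (1/(β−α))·(n(t,y) − αy)·(βy − n(t,y)) > −M for all t and y. Let x : [0, ∞) → ℝ^m be differentiable with x'(t) = A x(t) − B n(t, C x(t)) for all t ≥ 0. Set Y = 2√((M/ε) · C P⁻¹ Cᵀ). Then for every η > 0 there exists t_η ≥ 0 such that |C x(t)| < Y + η for all t > t_η. -/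

import Mathlib

open Matrix Filter Topology

/-!
With `V = xᵀ P x` and `w = α y - n(t, y)`, the state equation is `x' = (A - αBC) x + w B`. The
ε-KYP equations for this loop-shifted realization, after completing the square in `L x + w J`,
give `V' ≤ -(ε/2) V + 2 (w y + w² / (β - α))`, and the sector condition bounds the supply rate
`w y + w² / (β - α)` by `M`. Grönwall then gives `limsup V ≤ 4M/ε`, and Cauchy–Schwarz for the
inner product defined by `P`, `(C x)² ≤ (C P⁻¹ Cᵀ) (xᵀ P x)`, turns this into `limsup |C x| ≤ Y`.
-/

namespace Matrix

variable {n : Type*} [Fintype n]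

theorem IsSymm.dotProduct_mulVec_comm {R : Type*} [CommSemiring R] {P : Matrix n n R}
    (hP : P.IsSymm) (u v : n → R) : u ⬝ᵥ P *ᵥ v = v ⬝ᵥ P *ᵥ u := by
  rw [dotProduct_mulVec, ← mulVec_transpose, hP.eq, dotProduct_comm]

theorem PosSemidef.sq_dotProduct_mulVec_le {P : Matrix n n ℝ} (hP : P.PosSemidef)
    (u v : n → ℝ) : (u ⬝ᵥ P *ᵥ v) ^ 2 ≤ (u ⬝ᵥ P *ᵥ u) * (v ⬝ᵥ P *ᵥ v) := by
  have hsymm : P.IsSymm := hP.isHermitian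
  have hquad : ∀ s : ℝ, 0 ≤ (u ⬝ᵥ P *ᵥ u) * (s * s) + 2 * (u ⬝ᵥ P *ᵥ v) * s + v ⬝ᵥ P *ᵥ v := by
    intro s
    have := hP.dotProduct_mulVec_nonneg (s • u + v)
    simp only [star_trivial, mulVec_add, mulVec_smul, dotProduct_add, add_dotProduct,
      dotProduct_smul, smul_dotProduct, smul_eq_mul, hsymm.dotProduct_mulVec_comm v u] at this
    linarith
  have := discrim_le_zero hquad
  rw [discrim] at this
  linarith

theorem PosDef.sq_dotProduct_le [DecidableEq n] {P : Matrix n n ℝ} (hP : P.PosDef)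
    (c v : n → ℝ) :
    (c ⬝ᵥ v) ^ 2 ≤ (c ⬝ᵥ P⁻¹ *ᵥ c) * (v ⬝ᵥ P *ᵥ v) := by
  have hPu : P *ᵥ (P⁻¹ *ᵥ c) = c := by
    rw [mulVec_mulVec, mul_nonsing_inv _ hP.det_pos.ne'.isUnit, one_mulVec]
  have hsymm : P.IsSymm := hP.isHermitian
  have := hP.posSemidef.sq_dotProduct_mulVec_le (P⁻¹ *ᵥ c) v
  rwa [hsymm.dotProduct_mulVec_comm _ v, hPu, dotProduct_comm v, dotProduct_comm _ c] at this

theorem sub_smul_vecMulVec_mulVec {R ι : Type*} [CommRing R] [Fintype ι]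
    (A : Matrix ι ι R) (B C v : ι → R) (α : R) :
    (A - α • vecMulVec B C) *ᵥ v = A *ᵥ v - (α * (C ⬝ᵥ v)) • B := by
  rw [sub_mulVec, smul_mulVec, vecMulVec_mulVec, op_smul_eq_smul, smul_smul]

end Matrix

section Deriv

variable {𝕜 : Type*} [NontriviallyNormedField 𝕜]

theorem HasDerivAt.dotProduct {ι : Type*} [Fintype ι] {f g : 𝕜 → ι → 𝕜} {f' g' : ι → 𝕜} {t : 𝕜}
    (hf : HasDerivAt f f' t) (hg : HasDerivAt g g' t) :
    HasDerivAt (fun τ => f τ ⬝ᵥ g τ) (f' ⬝ᵥ g t + f t ⬝ᵥ g') t := by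
  simp only [_root_.dotProduct, ← Finset.sum_add_distrib]
  exact HasDerivAt.fun_sum fun i _ => (hasDerivAt_pi.1 hf i).mul (hasDerivAt_pi.1 hg i)

theorem HasDerivAt.const_mulVec {ι κ : Type*} [Fintype κ] (P : Matrix ι κ 𝕜) {f : 𝕜 → κ → 𝕜}
    {f' : κ → 𝕜} {t : 𝕜} (hf : HasDerivAt f f' t) :
    HasDerivAt (fun τ => P *ᵥ f τ) (P *ᵥ f') t :=
  hasDerivAt_pi.2 fun i => by
    simpa [mulVec] using (hasDerivAt_const t (P i)).dotProduct hf

end Deriv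

theorem kyp_dissipation_le {ι κ : Type*} [Fintype ι] [Fintype κ] {Â P : Matrix ι ι ℝ}
    {L : Matrix κ ι ℝ} {B C : ι → ℝ} {J : κ → ℝ} {ε d : ℝ} (hP : P.IsSymm)
    (hKYP1 : P * Â + Âᵀ * P = -(Lᵀ * L) - (ε / 2) • P)
    (hKYP2 : P *ᵥ B = C - Lᵀ *ᵥ J) (hKYP3 : J ⬝ᵥ J = 2 * d) (v : ι → ℝ) (w : ℝ) :
    (Â *ᵥ v + w • B) ⬝ᵥ P *ᵥ v + v ⬝ᵥ P *ᵥ (Â *ᵥ v + w • B)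
      ≤ -(ε / 2) * (v ⬝ᵥ P *ᵥ v) + 2 * (w * (C ⬝ᵥ v) + d * w ^ 2) := by
  set z := L *ᵥ v
  have hquad : v ⬝ᵥ (P * Â + Âᵀ * P) *ᵥ v = Â *ᵥ v ⬝ᵥ P *ᵥ v + v ⬝ᵥ P *ᵥ (Â *ᵥ v) := by
    rw [add_mulVec, dotProduct_add, ← mulVec_mulVec, ← mulVec_mulVec, dotProduct_mulVec v Âᵀ,
      vecMul_transpose, add_comm]
  have hLL : v ⬝ᵥ (Lᵀ * L) *ᵥ v = z ⬝ᵥ z := by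
    rw [← mulVec_mulVec, dotProduct_mulVec, vecMul_transpose]
  have hB : v ⬝ᵥ P *ᵥ B = C ⬝ᵥ v - z ⬝ᵥ J := by
    rw [hKYP2, dotProduct_sub, dotProduct_comm v C, dotProduct_mulVec, vecMul_transpose]
  -- the completed square absorbing the cross term `-2 w ⟨L v, J⟩`
  have hsq : 0 ≤ (z + w • J) ⬝ᵥ (z + w • J) :=
    Finset.sum_nonneg fun i _ => mul_self_nonneg _
  rw [hKYP1, sub_mulVec, neg_mulVec, smul_mulVec, dotProduct_sub, dotProduct_neg, dotProduct_smul,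
    hLL, smul_eq_mul] at hquad
  simp only [add_dotProduct, dotProduct_add, smul_dotProduct, dotProduct_smul, smul_eq_mul,
    mulVec_add, mulVec_smul, hP.dotProduct_mulVec_comm B v, hB, dotProduct_comm J z, hKYP3] at hsq ⊢
  linarith

theorem le_gronwallBound_of_hasDerivAt {f f' : ℝ → ℝ} {K c a : ℝ}
    (hf : ∀ t ≥ a, HasDerivAt f (f' t) t) (bound : ∀ t ≥ a, f' t ≤ K * f t + c)
    {t : ℝ} (ht : a ≤ t) : f t ≤ gronwallBound (f a) K c (t - a) :=
  le_gronwallBound_of_liminf_deriv_right_le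
    (fun s hs => (hf s hs.1).continuousAt.continuousWithinAt)
    (fun s hs _ hr => (hf s hs.1).hasDerivWithinAt.liminf_right_slope_le hr)
    le_rfl (fun s hs => bound s hs.1) t ⟨ht, le_rfl⟩

theorem tendsto_gronwallBound_atTop {δ K c : ℝ} (hK : K < 0) :
    Tendsto (gronwallBound δ K c) atTop (𝓝 (-(c / K))) := by
  have hexp : Tendsto (fun x => Real.exp (K * x)) atTop (𝓝 0) :=
    Real.tendsto_exp_atBot.comp (tendsto_id.const_mul_atTop_of_neg hK)
  rw [gronwallBound_of_K_ne_0 hK.ne]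
  convert (hexp.const_mul δ).add ((hexp.sub_const 1).const_mul (c / K)) using 2; simp

theorem exists_forall_abs_lt_of_tendsto {y u : ℝ → ℝ} {Y : ℝ} (hu : Tendsto u atTop (𝓝 Y))
    (hyu : ∀ t ≥ 0, |y t| ≤ u t) : ∀ η > 0, ∃ tη, 0 ≤ tη ∧ ∀ t, tη < t → |y t| < Y + η := by
  intro η hη
  obtain ⟨t₀, ht₀⟩ := eventually_atTop.1 (hu.eventually_lt_const (lt_add_of_pos_right Y hη))
  refine ⟨max t₀ 0, le_max_right _ _, fun t ht => ?_⟩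
  exact (hyu t ((le_max_right _ _).trans ht.le)).trans_lt (ht₀ t ((le_max_left _ _).trans ht.le))

theorem shifted_supply_eq_neg_sector {α β : ℝ} (hαβ : α ≠ β) (y s : ℝ) :
    (α * y - s) * y + 1 / (β - α) * (α * y - s) ^ 2
      = -(1 / (β - α) * (s - α * y) * (β * y - s)) := by
  field_simp [sub_ne_zero.2 hαβ.symm]
  ring

theorem weak_circle_output_bound_general {m p : ℕ}
    (A : Matrix (Fin m) (Fin m) ℝ) (B : Fin m → ℝ) (C : Fin m → ℝ)
    (α β ε M : ℝ) (hαβ : α < β) (hε : 0 < ε)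
    (P : Matrix (Fin m) (Fin m) ℝ) (hP : P.PosDef)
    (L : Matrix (Fin p) (Fin m) ℝ) (J : Fin p → ℝ)
    (hKYP1 : P * (A - α • vecMulVec B C) + (A - α • vecMulVec B C)ᵀ * P
                = -(Lᵀ * L) - (ε / 2) • P)
    (hKYP2 : P.mulVec B = C - Lᵀ.mulVec J)
    (hKYP3 : J ⬝ᵥ J = 2 / (β - α))
    (n : ℝ → ℝ → ℝ)
    (hsector : ∀ t y, -M < (1 / (β - α)) * (n t y - α * y) * (β * y - n t y))
    (x : ℝ → Fin m → ℝ)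
    (hx : ∀ t, 0 ≤ t → HasDerivAt x (A.mulVec (x t) - n t (C ⬝ᵥ x t) • B) t)
    (Y : ℝ) (hY : Y = 2 * Real.sqrt ((M / ε) * (C ⬝ᵥ P⁻¹.mulVec C))) :
    ∀ η > (0 : ℝ), ∃ tη, 0 ≤ tη ∧ ∀ t, tη < t → |C ⬝ᵥ x t| < Y + η := by
  set Â := A - α • vecMulVec B C
  set w : ℝ → ℝ := fun t => α * (C ⬝ᵥ x t) - n t (C ⬝ᵥ x t)
  set V : ℝ → ℝ := fun t => x t ⬝ᵥ P *ᵥ x t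
  set S := C ⬝ᵥ P⁻¹ *ᵥ C
  set bound := gronwallBound (V 0) (-(ε / 2)) (2 * M)
  have hx' : ∀ t ≥ 0, HasDerivAt x (Â *ᵥ x t + w t • B) t := fun t ht => by
    convert hx t ht using 1
    rw [sub_smul_vecMulVec_mulVec]
    module
  have hdiss : ∀ t ≥ 0, (Â *ᵥ x t + w t • B) ⬝ᵥ P *ᵥ x t + x t ⬝ᵥ P *ᵥ (Â *ᵥ x t + w t • B)
      ≤ -(ε / 2) * V t + 2 * M := fun t _ => by
    have hsupply := shifted_supply_eq_neg_sector hαβ.ne (C ⬝ᵥ x t) (n t (C ⬝ᵥ x t))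
    have := kyp_dissipation_le (P := P) (d := 1 / (β - α)) hP.isHermitian hKYP1 hKYP2
      (by rw [hKYP3]; ring) (x t) (w t)
    linarith [hsector t (C ⬝ᵥ x t)]
  have hV : ∀ t ≥ 0, V t ≤ bound t := fun t ht => by
    simpa using le_gronwallBound_of_hasDerivAt
      (fun s hs => (hx' s hs).dotProduct ((hx' s hs).const_mulVec P)) hdiss ht
  have hY' : Y = √(S * -(2 * M / -(ε / 2))) := by
    rw [hY, show S * -(2 * M / -(ε / 2)) = 2 ^ 2 * (M / ε * S) by field_simp,
      Real.sqrt_mul (sq_nonneg 2), Real.sqrt_sq zero_le_two]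
  have hlim : Tendsto (fun t => √(S * bound t)) atTop (𝓝 Y) :=
    hY' ▸ (Real.continuous_sqrt.tendsto _).comp
      ((tendsto_gronwallBound_atTop (neg_neg_of_pos (half_pos hε))).const_mul S)
  refine exists_forall_abs_lt_of_tendsto hlim fun t ht => ?_
  calc |C ⬝ᵥ x t| ≤ √(S * V t) := Real.abs_le_sqrt (hP.sq_dotProduct_le C (x t))
    _ ≤ √(S * bound t) := by
      gcongr
      · exact hP.inv.posSemidef.dotProduct_mulVec_nonneg C
      · exact hV t ht

/-- Corollary to the Weak Circle Criterion: under the ε-KYP conditions for the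
shifted realization `(A - αBC, B, C, 1/(β-α))` and the hyperbolic sector
condition, the output `y = Cx` of the Lur'e system `x' = A x - B n(t, Cx)` is
eventually bounded by `Y + η` where `Y = 2√((M/ε) · C P⁻¹ Cᵀ)`. -/
theorem weak_circle_output_bound {m p : ℕ}
    (A : Matrix (Fin m) (Fin m) ℝ) (B : Fin m → ℝ) (C : Fin m → ℝ)
    (α β ε M : ℝ) (hαβ : α < β) (hε : 0 < ε) (hM : 0 < M)
    (P : Matrix (Fin m) (Fin m) ℝ) (hP : P.PosDef)
    (L : Matrix (Fin p) (Fin m) ℝ) (J : Fin p → ℝ)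
    (hKYP1 : P * (A - α • vecMulVec B C) + (A - α • vecMulVec B C)ᵀ * P
                = -(Lᵀ * L) - (ε / 2) • P)
    (hKYP2 : P.mulVec B = C - Lᵀ.mulVec J)
    (hKYP3 : J ⬝ᵥ J = 2 / (β - α))
    (n : ℝ → ℝ → ℝ) (hn : Continuous fun q : ℝ × ℝ => n q.1 q.2)
    (hsector : ∀ t y, -M < (1 / (β - α)) * (n t y - α * y) * (β * y - n t y))
    (x : ℝ → Fin m → ℝ)
    (hx : ∀ t, 0 ≤ t → HasDerivAt x (A.mulVec (x t) - n t (C ⬝ᵥ x t) • B) t)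
    (Y : ℝ) (hY : Y = 2 * Real.sqrt ((M / ε) * (C ⬝ᵥ P⁻¹.mulVec C))) :
    ∀ η > (0 : ℝ), ∃ tη, 0 ≤ tη ∧ ∀ t, tη < t → |C ⬝ᵥ x t| < Y + η :=
  weak_circle_output_bound_general A B C α β ε M hαβ hε P hP L J hKYP1 hKYP2 hKYP3 n hsector x hx Y
    hY
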